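/- arXiv:2012.14811 — 4 statements merged into one kernel-verified Lean document; each statement's English description precedes it below -/
import Mathlib

section
/- Let S be a quasi-thin association scheme (every valency is at most 2) and let n be the number of triples (a,b,c) with p_{ab}^c ≠ 0. Then n = (d+1)^2 + |{(a,b) : |R_{a'} R_b| = 2}|, where d+1 is the number of relations of S. -/
open scoped Classical

/-- An association scheme on a finite set `X` with `d + 1` relations. -/
structure AssocScheme (X : Type) [Fintype X] (d : ℕ) where
  /-- the relations `R_0, …, R_d` -/
  R : Fin (d + 1) → X → X → Prop
  rel_nonempty : ∀ i, ∃ x y, R i x y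
  partition : ∀ x y, ∃! i, R i x y
  diag : ∀ x y, R 0 x y ↔ x = y
  /-- the transpose involution `a ↦ a'` -/
  inv : Fin (d + 1) → Fin (d + 1)
  inv_spec : ∀ i x y, R (inv i) x y ↔ R i y x
  /-- the intersection numbers `p_{ij}^k` -/
  p : Fin (d + 1) → Fin (d + 1) → Fin (d + 1) → ℕ
  p_spec : ∀ i j k x y, R k x y → {z | R i x z ∧ R j z y}.ncard = p i j k

namespace AssocScheme

variable {X : Type} [Fintype X] [DecidableEq X] {d : ℕ}

/-- the valency `k_a = p_{a a'}^0` -/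
def k (S : AssocScheme X d) (a : Fin (d + 1)) : ℕ := S.p a (S.inv a) 0

/-- `|R_a R_b|`, the number of relations in the complex product -/
def nProd (S : AssocScheme X d) (a b : Fin (d + 1)) : ℕ :=
  (Finset.univ.filter fun c => 0 < S.p a b c).card

/-- the adjacency matrix of `R_b` over `F` -/
noncomputable def adj (S : AssocScheme X d) (F : Type) [Field F] (b : Fin (d + 1)) :
    Matrix X X F :=
  Matrix.of fun u v => if S.R b u v then 1 else 0

/-- the dual idempotent `E_a^*(x)` -/
noncomputable def dualIdem (S : AssocScheme X d) (F : Type) [Field F] (x : X)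
    (a : Fin (d + 1)) : Matrix X X F :=
  Matrix.diagonal fun u => if S.R a x u then 1 else 0

/-- the Terwilliger `F`-algebra of `S` with respect to the vertex `x` -/
noncomputable def Terw (S : AssocScheme X d) (F : Type) [Field F] (x : X) :
    Subalgebra F (Matrix X X F) :=
  Algebra.adjoin F (Set.range (S.adj F) ∪ Set.range (S.dualIdem F x))

/-- the all-ones matrix -/
def allOnes (X : Type) (F : Type) [Field F] : Matrix X X F := Matrix.of fun _ _ => 1

end AssocScheme

open AssocScheme

namespace AssocScheme

variable {X : Type} [Fintype X] {d : ℕ}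

lemma card_p (S : AssocScheme X d) (i j k : Fin (d + 1)) (x y : X) (h : S.R k x y) :
    (Finset.univ.filter fun z => S.R i x z ∧ S.R j z y).card = S.p i j k := by
  rw [← S.p_spec i j k x y h, ← Set.ncard_coe_finset]
  congr 1; ext z; simp

lemma rel_unique (S : AssocScheme X d) {c c' : Fin (d + 1)} {x y : X}
    (h1 : S.R c x y) (h2 : S.R c' x y) : c = c' := by
  obtain ⟨e, -, hu⟩ := S.partition x y
  exact (hu _ h1).trans (hu _ h2).symm

lemma inv_inv (S : AssocScheme X d) (i : Fin (d + 1)) : S.inv (S.inv i) = i := by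
  obtain ⟨x, y, h⟩ := S.rel_nonempty i
  have h1 : S.R (S.inv (S.inv i)) x y := by
    rw [S.inv_spec, S.inv_spec]; exact h
  exact S.rel_unique h1 h

lemma outdeg (S : AssocScheme X d) (b : Fin (d + 1)) (x : X) :
    (Finset.univ.filter fun y => S.R b x y).card = S.k b := by
  have h0 : S.R 0 x x := (S.diag x x).mpr rfl
  rw [show S.k b = S.p b (S.inv b) 0 from rfl, ← S.card_p b (S.inv b) 0 x x h0]
  congr 1
  apply Finset.filter_congr
  intro y _
  simp only [S.inv_spec]
  tauto

lemma k_pos (S : AssocScheme X d) (b : Fin (d + 1)) : 0 < S.k b := by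
  obtain ⟨x, y, h⟩ := S.rel_nonempty b
  rw [← S.outdeg b x]
  exact Finset.card_pos.mpr ⟨y, by simp [h]⟩

lemma exists_out (S : AssocScheme X d) (b : Fin (d + 1)) (z : X) : ∃ y, S.R b z y := by
  have h := S.k_pos b
  rw [← S.outdeg b z] at h
  obtain ⟨y, hy⟩ := Finset.card_pos.mp h
  exact ⟨y, (Finset.mem_filter.mp hy).2⟩

lemma p_inv_ne (S : AssocScheme X d) (a b c : Fin (d + 1)) (h : S.p a b c ≠ 0) :
    S.p (S.inv c) a (S.inv b) ≠ 0 := by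
  obtain ⟨x, y, hc⟩ := S.rel_nonempty c
  have h1 := S.card_p a b c x y hc
  have hne : (Finset.univ.filter fun z => S.R a x z ∧ S.R b z y).Nonempty :=
    Finset.card_pos.mp (by omega)
  obtain ⟨w, hw⟩ := hne
  obtain ⟨hw1, hw2⟩ := (Finset.mem_filter.mp hw).2
  have h2 := S.card_p (S.inv c) a (S.inv b) y w ((S.inv_spec b y w).mpr hw2)
  have hx : x ∈ Finset.univ.filter fun s => S.R (S.inv c) y s ∧ S.R a s w := by
    simp [(S.inv_spec c y x).mpr hc, hw1]
  have := Finset.card_pos.mpr ⟨x, hx⟩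
  omega

lemma nProd_pos (S : AssocScheme X d) (a b : Fin (d + 1)) : 0 < S.nProd a b := by
  obtain ⟨x0, y0, -⟩ := S.rel_nonempty 0
  obtain ⟨z, hz⟩ := S.exists_out a x0
  obtain ⟨y, hy⟩ := S.exists_out b z
  obtain ⟨c, hc, -⟩ := S.partition x0 y
  have h1 := S.card_p a b c x0 y hc
  have h2 : 0 < S.p a b c := by
    rw [← h1]
    exact Finset.card_pos.mpr ⟨z, by simp [hz, hy]⟩
  exact Finset.card_pos.mpr ⟨c, by simp [h2]⟩

lemma nProd_le_two (S : AssocScheme X d) (hqt : ∀ a, S.k a ≤ 2) (a b : Fin (d + 1)) :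
    S.nProd a b ≤ 2 := by
  obtain ⟨z, -, -⟩ := S.rel_nonempty 0
  set C : Finset (Fin (d + 1)) := Finset.univ.filter fun c => 0 < S.p a b c with hC
  set B : Finset X := Finset.univ.filter fun y => S.R b z y with hBdef
  set A : Finset X := Finset.univ.filter fun x => S.R a x z with hAdef
  set F : Fin (d + 1) → X → Finset X :=
    fun c y => Finset.univ.filter fun x => S.R a x z ∧ S.R c x y with hFdef
  have hB : B.card = S.k b := S.outdeg b z
  have hA : A.card = S.k (S.inv a) := by
    rw [← S.outdeg (S.inv a) z]
    congr 1
    apply Finset.filter_congr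
    intro x _
    simp [S.inv_spec]
  -- cardinality of each fiber
  have hfib : ∀ c ∈ C, ∀ y ∈ B, (F c y).card = S.p (S.inv c) a (S.inv b) := by
    intro c _ y hy
    have hby : S.R b z y := (Finset.mem_filter.mp hy).2
    have := S.card_p (S.inv c) a (S.inv b) y z ((S.inv_spec b y z).mpr hby)
    rw [← this]
    congr 1
    apply Finset.filter_congr
    intro x _
    simp only [S.inv_spec]
    tauto
  -- lower bound for each c ∈ C
  have key1 : ∀ c ∈ C, S.k b ≤ ∑ y ∈ B, (F c y).card := by
    intro c hc
    have hpc : S.p a b c ≠ 0 := by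
      have := (Finset.mem_filter.mp hc).2; omega
    have hp := S.p_inv_ne a b c hpc
    rw [Finset.sum_congr rfl (hfib c hc), Finset.sum_const, hB, smul_eq_mul]
    exact Nat.le_mul_of_pos_right _ (Nat.pos_of_ne_zero hp)
  -- upper bound on the double sum
  have key2 : ∑ c ∈ C, ∑ y ∈ B, (F c y).card ≤ S.k b * S.k (S.inv a) := by
    rw [Finset.sum_comm]
    calc ∑ y ∈ B, ∑ c ∈ C, (F c y).card
        ≤ ∑ y ∈ B, A.card := by
          apply Finset.sum_le_sum
          intro y _
          have hdisj : ∀ c ∈ C, ∀ c' ∈ C, c ≠ c' → Disjoint (F c y) (F c' y) := by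
            intro c _ c' _ hne
            rw [Finset.disjoint_left]
            intro x hx hx'
            exact hne (S.rel_unique (Finset.mem_filter.mp hx).2.2
              (Finset.mem_filter.mp hx').2.2)
          rw [← Finset.card_biUnion hdisj]
          apply Finset.card_le_card
          intro x hx
          obtain ⟨c, -, hxc⟩ := Finset.mem_biUnion.mp hx
          exact Finset.mem_filter.mpr ⟨Finset.mem_univ x, (Finset.mem_filter.mp hxc).2.1⟩
      _ = S.k b * S.k (S.inv a) := by rw [Finset.sum_const, hB, hA, smul_eq_mul]
  have main : S.nProd a b * S.k b ≤ 2 * S.k b := by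
    calc S.nProd a b * S.k b = ∑ _c ∈ C, S.k b := by
          rw [Finset.sum_const, smul_eq_mul, hC]; rfl
      _ ≤ ∑ c ∈ C, ∑ y ∈ B, (F c y).card := Finset.sum_le_sum key1
      _ ≤ S.k b * S.k (S.inv a) := key2
      _ ≤ 2 * S.k b := by
          rw [Nat.mul_comm]
          exact Nat.mul_le_mul_right _ (hqt (S.inv a))
  exact Nat.le_of_mul_le_mul_right main (S.k_pos b)

end AssocScheme

/-- for a quasi-thin scheme, the number of nonzero intersection numbers is
`(d+1)^2 + |{(a,b) : |R_{a'} R_b| = 2}|`. -/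
theorem stmt_2 {X : Type} [Fintype X] {d : ℕ} (S : AssocScheme X d)
    (hqt : ∀ a, S.k a ≤ 2) :
    (Finset.univ.filter
        (fun t : Fin (d + 1) × Fin (d + 1) × Fin (d + 1) => S.p t.1 t.2.1 t.2.2 ≠ 0)).card =
      (d + 1) ^ 2 +
        (Finset.univ.filter
          (fun q : Fin (d + 1) × Fin (d + 1) => S.nProd (S.inv q.1) q.2 = 2)).card := by
  have hinv : Function.Bijective S.inv :=
    Function.Involutive.bijective (fun i => S.inv_inv i)
  have hlhs :
      (Finset.univ.filter
        (fun t : Fin (d + 1) × Fin (d + 1) × Fin (d + 1) => S.p t.1 t.2.1 t.2.2 ≠ 0)).card =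
      ∑ a : Fin (d + 1), ∑ b : Fin (d + 1), S.nProd a b := by
    rw [Finset.card_filter, Fintype.sum_prod_type]
    refine Finset.sum_congr rfl fun a _ => ?_
    rw [Fintype.sum_prod_type]
    refine Finset.sum_congr rfl fun b _ => ?_
    rw [← Finset.card_filter]
    unfold AssocScheme.nProd
    congr 1
    apply Finset.filter_congr
    intro c _
    simp [Nat.pos_iff_ne_zero]
  have hreindex : ∑ a : Fin (d + 1), ∑ b : Fin (d + 1), S.nProd a b =
      ∑ a : Fin (d + 1), ∑ b : Fin (d + 1), S.nProd (S.inv a) b :=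
    (Fintype.sum_bijective S.inv hinv
      (fun a => ∑ b : Fin (d + 1), S.nProd (S.inv a) b)
      (fun a => ∑ b : Fin (d + 1), S.nProd a b) (fun a => rfl)).symm
  have hrhs :
      (Finset.univ.filter
        (fun q : Fin (d + 1) × Fin (d + 1) => S.nProd (S.inv q.1) q.2 = 2)).card =
      ∑ a : Fin (d + 1), ∑ b : Fin (d + 1),
        (if S.nProd (S.inv a) b = 2 then 1 else 0) := by
    rw [Finset.card_filter, Fintype.sum_prod_type]
  rw [hlhs, hreindex, hrhs]
  have hsq : (d + 1) ^ 2 = ∑ _a : Fin (d + 1), ∑ _b : Fin (d + 1), 1 := by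
    simp [sq]
  rw [hsq, ← Finset.sum_add_distrib]
  refine Finset.sum_congr rfl fun a _ => ?_
  rw [← Finset.sum_add_distrib]
  refine Finset.sum_congr rfl fun b _ => ?_
  have h1 := S.nProd_pos (S.inv a) b
  have h2 := S.nProd_le_two hqt (S.inv a) b
  split_ifs <;> omega
end

section
/- With notation as for Terwilliger algebras: if k_i k_j = p_{ij}^ℓ k_ℓ, then for any relations R_m, R_n, E_i^* A_j E_ℓ^* A_m E_n^* = E_i^* A_j A_m E_n^* = Σ_k (p_{jm}^k mod p) E_i^* A_k E_n^*. -/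
open scoped Classical

open AssocScheme

section Aux

variable {X : Type} [Fintype X] [DecidableEq X] {d : ℕ}

lemma aux_ncard_filter (P : X → Prop) :
    {z | P z}.ncard = (Finset.univ.filter P).card := by
  classical
  rw [Set.ncard_eq_toFinset_card']
  simp

lemma aux_card_rel (S : AssocScheme X d) (a : Fin (d + 1)) (x : X) :
    (Finset.univ.filter fun z => S.R a x z).card = S.k a := by
  classical
  have h0 : S.R 0 x x := (S.diag x x).2 rfl
  have hp := S.p_spec a (S.inv a) 0 x x h0
  rw [show S.k a = S.p a (S.inv a) 0 from rfl, ← hp, aux_ncard_filter]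
  congr 1
  ext z
  simp [S.inv_spec]

lemma aux_k_pos (S : AssocScheme X d) (a : Fin (d + 1)) : 0 < S.k a := by
  classical
  obtain ⟨y, z, hyz⟩ := S.rel_nonempty a
  rw [← aux_card_rel S a y]
  exact Finset.card_pos.2 ⟨z, by simp [hyz]⟩

lemma aux_p_card (S : AssocScheme X d) (i j c : Fin (d + 1)) (x v : X) (h : S.R c x v) :
    (Finset.univ.filter fun u => S.R i x u ∧ S.R j u v).card = S.p i j c := by
  rw [← S.p_spec i j c x v h, aux_ncard_filter]
  congr!

lemma aux_sum_p_k (S : AssocScheme X d) (i j : Fin (d + 1)) (x : X) :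
    S.k i * S.k j = ∑ c, S.p i j c * S.k c := by
  classical
  have lhs : (∑ u : X, ∑ v : X, if S.R i x u ∧ S.R j u v then 1 else 0)
      = S.k i * S.k j := by
    calc (∑ u : X, ∑ v : X, if S.R i x u ∧ S.R j u v then 1 else 0)
        = ∑ u : X, if S.R i x u then S.k j else 0 := by
          refine Finset.sum_congr rfl fun u _ => ?_
          by_cases hu : S.R i x u
          · simp only [hu, true_and, if_true]
            rw [Finset.sum_boole, aux_card_rel S j u]; norm_num
          · simp [hu]
      _ = S.k i * S.k j := by
          rw [Finset.sum_ite, Finset.sum_const, Finset.sum_const,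
            aux_card_rel S i x]
          simp [mul_comm]
  have rhs : (∑ u : X, ∑ v : X, if S.R i x u ∧ S.R j u v then 1 else 0)
      = ∑ c, S.p i j c * S.k c := by
    rw [Finset.sum_comm]
    calc (∑ v : X, ∑ u : X, if S.R i x u ∧ S.R j u v then 1 else 0)
        = ∑ v : X, ∑ c, if S.R c x v then S.p i j c else 0 := by
          refine Finset.sum_congr rfl fun v _ => ?_
          obtain ⟨c0, hc0, huniq⟩ := S.partition x v
          rw [Finset.sum_boole, aux_p_card S i j c0 x v hc0]
          rw [Finset.sum_eq_single c0]
          · simp [hc0]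
          · intro c _ hc
            have : ¬ S.R c x v := fun hcv => hc (huniq c hcv)
            simp [this]
          · simp
      _ = ∑ c, S.p i j c * S.k c := by
          rw [Finset.sum_comm]
          refine Finset.sum_congr rfl fun c _ => ?_
          rw [Finset.sum_ite, Finset.sum_const, Finset.sum_const,
            aux_card_rel S c x]
          simp [mul_comm]
  rw [← lhs, rhs]

lemma aux_key (S : AssocScheme X d) (i j l : Fin (d + 1))
    (h : S.k i * S.k j = S.p i j l * S.k l) (x : X) :
    ∀ u z : X, S.R i x u → S.R j u z → S.R l x z := by
  classical
  intro u z hu hz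
  obtain ⟨c, hc, huniq⟩ := S.partition x z
  by_cases hcl : c = l
  · exact hcl ▸ hc
  · exfalso
    have hsum := aux_sum_p_k S i j x
    rw [h] at hsum
    have h1 : (∑ c'' ∈ Finset.univ.erase l, S.p i j c'' * S.k c'')
        + S.p i j l * S.k l = ∑ c'', S.p i j c'' * S.k c'' := by
      simpa using Finset.sum_erase_add Finset.univ
        (fun c'' => S.p i j c'' * S.k c'') (Finset.mem_univ l)
    have herase : ∑ c'' ∈ Finset.univ.erase l, S.p i j c'' * S.k c'' = 0 := by omega
    have h0 : S.p i j c * S.k c = 0 := by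
      have := (Finset.sum_eq_zero_iff.1 herase) c
        (Finset.mem_erase.2 ⟨hcl, Finset.mem_univ c⟩)
      simpa using this
    have hpc : S.p i j c = 0 := by
      have hk := aux_k_pos S c
      rcases Nat.mul_eq_zero.1 h0 with h0 | h0
      · exact h0
      · omega
    have hcard := aux_p_card S i j c x z hc
    rw [hpc] at hcard
    have : u ∈ Finset.univ.filter fun w => S.R i x w ∧ S.R j w z := by
      simp [hu, hz]
    have := Finset.card_pos.2 ⟨u, this⟩
    omega

end Aux

/-- triple product identity under `k_i k_j = p_{ij}^ℓ k_ℓ`. -/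
theorem stmt_7 {X : Type} [Fintype X] [DecidableEq X] {d : ℕ} (S : AssocScheme X d)
    (F : Type) [Field F] (x : X) (i j l : Fin (d + 1))
    (h : S.k i * S.k j = S.p i j l * S.k l) (m n : Fin (d + 1)) :
    S.dualIdem F x i * S.adj F j * S.dualIdem F x l * S.adj F m * S.dualIdem F x n =
      S.dualIdem F x i * S.adj F j * S.adj F m * S.dualIdem F x n ∧
    S.dualIdem F x i * S.adj F j * S.adj F m * S.dualIdem F x n =
      ∑ kk : Fin (d + 1),
        ((S.p j m kk : F)) • (S.dualIdem F x i * S.adj F kk * S.dualIdem F x n) := by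
  classical
  have key := aux_key S i j l h x
  have eEA : ∀ a b : Fin (d + 1), S.dualIdem F x a * S.adj F b
      = Matrix.of (fun u v => if S.R a x u ∧ S.R b u v then (1 : F) else 0) := by
    intro a b; ext u v
    simp only [dualIdem, adj, Matrix.diagonal_mul, Matrix.of_apply]
    by_cases h1 : S.R a x u <;> by_cases h2 : S.R b u v <;> simp [h1, h2]
  have eME : ∀ (M : Matrix X X F) (a : Fin (d + 1)), M * S.dualIdem F x a
      = Matrix.of (fun u v => if S.R a x v then M u v else 0) := by
    intro M a; ext u v
    simp only [dualIdem, Matrix.mul_diagonal, Matrix.of_apply]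
    by_cases h1 : S.R a x v <;> simp [h1]
  have eMA : ∀ (M : Matrix X X F) (b : Fin (d + 1)), M * S.adj F b
      = Matrix.of (fun u v => ∑ z, if S.R b z v then M u z else 0) := by
    intro M b; ext u v
    simp only [adj, Matrix.mul_apply, Matrix.of_apply]
    refine Finset.sum_congr rfl fun z _ => ?_
    by_cases h1 : S.R b z v <;> simp [h1]
  have ent2 : ∀ (b : Fin (d + 1)) (u v : X),
      (S.dualIdem F x i * S.adj F b * S.dualIdem F x n) u v
        = if S.R n x v then (if S.R i x u ∧ S.R b u v then (1 : F) else 0) else 0 := by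
    intro b u v
    rw [eEA, eME]
    simp
  constructor
  · rw [eEA i j, eME _ l, eMA _ m, eMA _ m, eME _ n, eME _ n]
    ext u v
    simp only [Matrix.of_apply]
    by_cases hn : S.R n x v
    · simp only [hn, if_true]
      refine Finset.sum_congr rfl fun z _ => ?_
      by_cases hm : S.R m z v
      · simp only [hm, if_true]
        by_cases h1 : S.R i x u
        · by_cases h2 : S.R j u z
          · have h3 : S.R l x z := key u z h1 h2
            simp [h1, h2, h3]
          · simp [h2]
        · simp [h1]
      · simp [hm]
    · simp [hn]
  · rw [eEA i j, eMA _ m, eME _ n]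
    ext u v
    simp only [Matrix.of_apply, Matrix.sum_apply, Matrix.smul_apply, smul_eq_mul, ent2]
    obtain ⟨c0, hc0, huniq⟩ := S.partition u v
    by_cases hn : S.R n x v
    · simp only [hn, if_true, mul_ite, mul_one, mul_zero]
      by_cases h1 : S.R i x u
      · have hl : (∑ z : X, if S.R m z v then
            (if S.R i x u ∧ S.R j u z then (1 : F) else 0) else 0) = (S.p j m c0 : F) := by
          rw [← aux_p_card S j m c0 u v hc0, ← Finset.sum_boole]
          refine Finset.sum_congr rfl fun z _ => ?_
          by_cases hj : S.R j u z <;> by_cases hm : S.R m z v <;> simp [hj, hm, h1]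
        rw [hl, Finset.sum_eq_single c0]
        · simp [hc0, h1]
        · intro c _ hc
          have : ¬ S.R c u v := fun hcv => hc (huniq c hcv)
          simp [this, h1]
        · simp
      · simp [h1]
    · simp [hn]
end

section
/- Let S be a quasi-thin association scheme over a field F of characteristic 2, and suppose S is not thin. Then the Terwilliger F-algebra T of S with respect to any vertex is not semisimple; in particular, the F-span of the set {E_a^* J E_b^* : max(k_a, k_b) = 2} is a nonzero two-sided nilpotent ideal of T (with cube zero). -/
open scoped Classical

open AssocScheme

section Generic

/-- A ring with a nonzero two-sided ideal whose cube is zero is not semisimple. -/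
theorem not_semisimple_of_nilpotent_ideal {R : Type*} [Ring R] (I : Submodule R R)
    (hr : ∀ a ∈ I, ∀ r : R, a * r ∈ I)
    (h3 : ∀ a ∈ I, ∀ b ∈ I, ∀ c ∈ I, a * b * c = 0) (hne : I ≠ ⊥) :
    ¬ IsSemisimpleRing R := by
  intro hss
  obtain ⟨J, hJ⟩ := exists_isCompl I
  have h1 : (1 : R) ∈ I ⊔ J := by rw [hJ.sup_eq_top]; trivial
  obtain ⟨e, he, f, hf, hef⟩ := Submodule.mem_sup.mp h1
  have key : ∀ a ∈ I, a = a * e := by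
    intro a ha
    have hsplit : a * e + a * f = a := by rw [← mul_add, hef, mul_one]
    have hIf : a * f ∈ I := by
      have : a * f = a - a * e := by rw [eq_sub_iff_add_eq', hsplit]
      rw [this]; exact sub_mem ha (hr a ha e)
    have hJf : a * f ∈ J := by simpa [smul_eq_mul] using J.smul_mem a hf
    have hzero : a * f = 0 := (Submodule.disjoint_def.mp hJ.disjoint) _ hIf hJf
    nth_rewrite 1 [← hsplit]
    rw [hzero, add_zero]
  have he0 : e = 0 := by
    have h2 : e = e * e := key e he
    have h30 : e * e * e = 0 := h3 e he e he e he
    have h4 : e * e = e * e * e := by nth_rewrite 1 [h2]; rfl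
    rw [h2, h4, h30]
  refine hne (eq_bot_iff.mpr fun a ha => ?_)
  have := key a ha
  rw [he0, mul_zero] at this
  simp [this]

end Generic

open AssocScheme

section SchemeLemmas

set_option linter.unusedSectionVars false

variable {X : Type} [Fintype X] [DecidableEq X] {d : ℕ} (S : AssocScheme X d) (x : X)

lemma AssocScheme.rel_unique_s15 {i j : Fin (d + 1)} {u v : X}
    (hi : S.R i u v) (hj : S.R j u v) : i = j := by
  obtain ⟨c, _, hc⟩ := S.partition u v
  rw [hc i hi, hc j hj]

lemma AssocScheme.card_filter_p (i j c : Fin (d + 1)) {u v : X} (h : S.R c u v) :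
    (Finset.univ.filter fun z => S.R i u z ∧ S.R j z v).card = S.p i j c := by
  have h2 := S.p_spec i j c u v h
  rw [Set.ncard_eq_toFinset_card'] at h2
  rw [← h2]
  congr 1
  ext z
  simp

lemma AssocScheme.card_X (a : Fin (d + 1)) :
    (Finset.univ.filter fun u => S.R a x u).card = S.k a := by
  have h0 : S.R 0 x x := (S.diag x x).mpr rfl
  have h2 := S.card_filter_p a (S.inv a) 0 h0
  rw [AssocScheme.k, ← h2]
  apply Finset.card_bij (fun u _ => u) <;> intro u hu <;>
    simp_all [S.inv_spec]

lemma AssocScheme.k_pos_s15 (a : Fin (d + 1)) : 0 < S.k a := by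
  obtain ⟨y, z, hyz⟩ := S.rel_nonempty a
  have h0 : S.R 0 y y := (S.diag y y).mpr rfl
  have h2 := S.card_filter_p a (S.inv a) 0 h0
  rw [AssocScheme.k, ← h2]
  apply Finset.card_pos.mpr
  exact ⟨z, by simp [hyz, (S.inv_spec a z y).mpr hyz]⟩

include x in
lemma AssocScheme.double_count (a c e : Fin (d + 1)) :
    S.k e * S.p a c e = S.k a * S.p c (S.inv e) (S.inv a) := by
  have key1 : ∑ y : X, ∑ z : X,
      (if S.R e x y ∧ (S.R a x z ∧ S.R c z y) then 1 else 0 : ℕ) = S.k e * S.p a c e := by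
    have inner : ∀ y : X, ∑ z : X,
        (if S.R e x y ∧ (S.R a x z ∧ S.R c z y) then 1 else 0 : ℕ)
        = if S.R e x y then S.p a c e else 0 := by
      intro y
      by_cases hy : S.R e x y
      · simp only [hy, true_and, if_true]
        rw [← S.card_filter_p a c e hy, Finset.card_filter]
      · simp [hy]
    rw [Finset.sum_congr rfl fun y _ => inner y, ← Finset.sum_filter,
      Finset.sum_const, S.card_X x e, smul_eq_mul]
  have key2 : ∑ z : X, ∑ y : X,
      (if S.R e x y ∧ (S.R a x z ∧ S.R c z y) then 1 else 0 : ℕ)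
      = S.k a * S.p c (S.inv e) (S.inv a) := by
    have inner : ∀ z : X, ∑ y : X,
        (if S.R e x y ∧ (S.R a x z ∧ S.R c z y) then 1 else 0 : ℕ)
        = if S.R a x z then S.p c (S.inv e) (S.inv a) else 0 := by
      intro z
      by_cases hz : S.R a x z
      · have hz' : S.R (S.inv a) z x := (S.inv_spec a z x).mpr hz
        simp only [hz, true_and, if_true]
        rw [← S.card_filter_p c (S.inv e) (S.inv a) hz', Finset.card_filter]
        refine Finset.sum_congr rfl fun y _ => if_congr ?_ rfl rfl
        rw [S.inv_spec]
        tauto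
      · simp [hz]
    rw [Finset.sum_congr rfl fun z _ => inner z, ← Finset.sum_filter,
      Finset.sum_const, S.card_X x a, smul_eq_mul]
  rw [← key1, ← key2, Finset.sum_comm]

end SchemeLemmas

section MatrixLemmas

set_option linter.unusedSectionVars false

variable {X : Type} [Fintype X] [DecidableEq X] {d : ℕ} (S : AssocScheme X d)
  (F : Type) [Field F] (x : X)

/-- indicator of the sphere `X_a` around `x` -/
noncomputable def qtChi (a : Fin (d + 1)) (u : X) : F := if S.R a x u then 1 else 0

/-- the block all-ones matrix `E_a^* J E_b^*` -/
noncomputable def qtG (a b : Fin (d + 1)) : Matrix X X F :=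
  Matrix.of fun u v => qtChi S F x a u * qtChi S F x b v

lemma qtChi_mul_self (a : Fin (d + 1)) (u : X) :
    qtChi S F x a u * qtChi S F x a u = qtChi S F x a u := by
  unfold qtChi; split <;> simp

lemma qtChi_mul_ne {a b : Fin (d + 1)} (hab : a ≠ b) (u : X) :
    qtChi S F x a u * qtChi S F x b u = 0 := by
  unfold qtChi
  by_cases ha : S.R a x u
  · by_cases hb : S.R b x u
    · exact absurd (S.rel_unique_s15 ha hb) hab
    · simp [hb]
  · simp [ha]

lemma sum_qtChi (a : Fin (d + 1)) : ∑ u : X, qtChi S F x a u = (S.k a : F) := by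
  unfold qtChi
  rw [Finset.sum_boole, S.card_X x a]

lemma qtG_eq (a b : Fin (d + 1)) :
    S.dualIdem F x a * allOnes X F * S.dualIdem F x b = qtG S F x a b := by
  ext u v
  simp only [AssocScheme.dualIdem]
  rw [Matrix.mul_diagonal, Matrix.diagonal_mul]
  simp [allOnes, qtG, qtChi]

lemma dualIdem_mul_qtG (c a b : Fin (d + 1)) :
    S.dualIdem F x c * qtG S F x a b =
      if c = a then qtG S F x a b else 0 := by
  ext u v
  simp only [AssocScheme.dualIdem]
  rw [Matrix.diagonal_mul]
  by_cases hca : c = a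
  · subst hca
    rw [if_pos rfl]
    simp only [qtG, Matrix.of_apply, ← mul_assoc]
    rw [show (if S.R c x u then (1:F) else 0) = qtChi S F x c u from rfl,
      qtChi_mul_self]
  · rw [if_neg hca]
    simp only [Matrix.zero_apply, qtG, Matrix.of_apply, ← mul_assoc]
    rw [show (if S.R c x u then (1:F) else 0) = qtChi S F x c u from rfl,
      qtChi_mul_ne S F x hca, zero_mul]

lemma qtG_mul_dualIdem (c a b : Fin (d + 1)) :
    qtG S F x a b * S.dualIdem F x c =
      if b = c then qtG S F x a b else 0 := by
  ext u v
  simp only [AssocScheme.dualIdem]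
  rw [Matrix.mul_diagonal]
  by_cases hbc : b = c
  · subst hbc
    rw [if_pos rfl]
    simp only [qtG, Matrix.of_apply, mul_assoc]
    rw [show (if S.R b x v then (1:F) else 0) = qtChi S F x b v from rfl,
      qtChi_mul_self]
  · rw [if_neg hbc]
    simp only [Matrix.zero_apply, qtG, Matrix.of_apply, mul_assoc]
    rw [show (if S.R c x v then (1:F) else 0) = qtChi S F x c v from rfl,
      qtChi_mul_ne S F x hbc, mul_zero]

lemma adj_mul_qtG (c a b : Fin (d + 1)) :
    S.adj F c * qtG S F x a b =
      ∑ e : Fin (d + 1), (S.p a (S.inv c) e : F) • qtG S F x e b := by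
  ext u v
  obtain ⟨e0, he0, hu⟩ := S.partition x u
  have lhs : (S.adj F c * qtG S F x a b) u v
      = (S.p a (S.inv c) e0 : F) * qtChi S F x b v := by
    rw [Matrix.mul_apply]
    have term : ∀ w : X, S.adj F c u w * qtG S F x a b w v
        = (if S.R a x w ∧ S.R (S.inv c) w u then (1:F) else 0) * qtChi S F x b v := by
      intro w
      simp only [adj, qtG, qtChi, Matrix.of_apply, S.inv_spec c w u]
      by_cases h1 : S.R c u w <;> by_cases h2 : S.R a x w <;> simp [h1, h2]
    rw [Finset.sum_congr rfl fun w _ => term w, ← Finset.sum_mul, Finset.sum_boole,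
      S.card_filter_p a (S.inv c) e0 he0]
  rw [lhs, Matrix.sum_apply]
  rw [Finset.sum_eq_single e0]
  · simp only [Matrix.smul_apply, qtG, Matrix.of_apply, smul_eq_mul]
    have : qtChi S F x e0 u = 1 := by simp [qtChi, he0]
    rw [this, one_mul]
  · intro e _ hne
    have : qtChi S F x e u = 0 := by
      unfold qtChi; rw [if_neg]; exact fun h => hne (hu e h)
    simp [qtG, this]
  · intro h; exact absurd (Finset.mem_univ e0) h

lemma qtG_mul_adj (c a b : Fin (d + 1)) :
    qtG S F x a b * S.adj F c =
      ∑ e : Fin (d + 1), (S.p b c e : F) • qtG S F x a e := by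
  ext u v
  obtain ⟨e0, he0, hv⟩ := S.partition x v
  have lhs : (qtG S F x a b * S.adj F c) u v
      = qtChi S F x a u * (S.p b c e0 : F) := by
    rw [Matrix.mul_apply]
    have term : ∀ w : X, qtG S F x a b u w * S.adj F c w v
        = qtChi S F x a u * (if S.R b x w ∧ S.R c w v then (1:F) else 0) := by
      intro w
      simp only [adj, qtG, qtChi, Matrix.of_apply]
      by_cases h1 : S.R c w v <;> by_cases h2 : S.R b x w <;> simp [h1, h2]
    rw [Finset.sum_congr rfl fun w _ => term w, ← Finset.mul_sum, Finset.sum_boole,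
      S.card_filter_p b c e0 he0]
  rw [lhs, Matrix.sum_apply]
  rw [Finset.sum_eq_single e0]
  · simp only [Matrix.smul_apply, qtG, Matrix.of_apply, smul_eq_mul]
    have : qtChi S F x e0 v = 1 := by simp [qtChi, he0]
    rw [this, mul_one]
    ring
  · intro e _ hne
    have : qtChi S F x e v = 0 := by
      unfold qtChi; rw [if_neg]; exact fun h => hne (hv e h)
    simp [qtG, this]
  · intro h; exact absurd (Finset.mem_univ e0) h

lemma qtG_mul_qtG (a b c e : Fin (d + 1)) :
    qtG S F x a b * qtG S F x c e =
      (if b = c then (S.k b : F) else 0) • qtG S F x a e := by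
  ext u v
  rw [Matrix.mul_apply]
  have term : ∀ w : X, qtG S F x a b u w * qtG S F x c e w v
      = (qtChi S F x b w * qtChi S F x c w) * (qtChi S F x a u * qtChi S F x e v) := by
    intro w; simp only [qtG, Matrix.of_apply]; ring
  rw [Finset.sum_congr rfl fun w _ => term w, ← Finset.sum_mul]
  simp only [Matrix.smul_apply, qtG, Matrix.of_apply, smul_eq_mul]
  congr 1
  by_cases hbc : b = c
  · subst hbc
    rw [Finset.sum_congr rfl fun w _ => qtChi_mul_self S F x b w, sum_qtChi, if_pos rfl]
  · rw [Finset.sum_congr rfl fun w _ => qtChi_mul_ne S F x hbc w, Finset.sum_const,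
      smul_zero, if_neg hbc]

lemma allOnes_eq_sum : allOnes X F = ∑ c : Fin (d + 1), S.adj F c := by
  ext u v
  obtain ⟨c0, hc0, hc⟩ := S.partition u v
  rw [Matrix.sum_apply, Finset.sum_eq_single c0]
  · simp [allOnes, adj, hc0]
  · intro c _ hne
    have : ¬ S.R c u v := fun h => hne (hc c h)
    simp [adj, this]
  · intro h; exact absurd (Finset.mem_univ c0) h

lemma even_cast_zero {n : ℕ} (hchar : ringChar F = 2) (hn : Even n) : (n : F) = 0 := by
  haveI : CharP F 2 := by rw [← hchar]; exact ringChar.charP F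
  obtain ⟨m, rfl⟩ := hn
  push_cast
  rw [← two_mul, show (2 : F) = 0 by exact_mod_cast CharP.cast_eq_zero F 2, zero_mul]
  
lemma two_cast_zero (hchar : ringChar F = 2) : ((2:ℕ) : F) = 0 := by
  haveI : CharP F 2 := by rw [← hchar]; exact ringChar.charP F
  exact CharP.cast_eq_zero F 2

end MatrixLemmas

section MainLemmas

set_option linter.unusedSectionVars false

variable {X : Type} [Fintype X] [DecidableEq X] {d : ℕ} (S : AssocScheme X d)
  (F : Type) [Field F] (x : X)

/-- the generating set of the nilpotent ideal -/
noncomputable def qtSet : Set (Matrix X X F) :=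
  {M : Matrix X X F | ∃ a b, max (S.k a) (S.k b) = 2 ∧
    M = S.dualIdem F x a * allOnes X F * S.dualIdem F x b}

lemma qtG_mem {a b : Fin (d + 1)} (h : max (S.k a) (S.k b) = 2) :
    qtG S F x a b ∈ Submodule.span F (qtSet S F x) :=
  Submodule.subset_span ⟨a, b, h, (qtG_eq S F x a b).symm⟩

lemma max_two_cases (hqt : ∀ a, S.k a ≤ 2) {a b : Fin (d + 1)}
    (h : ¬ max (S.k a) (S.k b) = 2) : S.k a = 1 ∧ S.k b = 1 := by
  have ha := S.k_pos_s15 a; have hb := S.k_pos_s15 b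
  have ha2 := hqt a; have hb2 := hqt b
  omega

lemma adj_mul_mem (hqt : ∀ a, S.k a ≤ 2) (hchar : ringChar F = 2) (c a b : Fin (d + 1))
    (h : max (S.k a) (S.k b) = 2) :
    S.adj F c * qtG S F x a b ∈ Submodule.span F (qtSet S F x) := by
  rw [adj_mul_qtG]
  apply Submodule.sum_mem
  intro e _
  by_cases he : max (S.k e) (S.k b) = 2
  · exact Submodule.smul_mem _ _ (qtG_mem S F x he)
  · obtain ⟨hke, hkb⟩ := max_two_cases S hqt he
    have hka : S.k a = 2 := by rw [hkb] at h; omega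
    have hdc := S.double_count x a (S.inv c) e
    rw [hke, one_mul, hka] at hdc
    have hz : (S.p a (S.inv c) e : F) = 0 :=
      even_cast_zero F hchar ⟨S.p (S.inv c) (S.inv e) (S.inv a), by omega⟩
    rw [hz, zero_smul]
    exact Submodule.zero_mem _

lemma mul_adj_mem (hqt : ∀ a, S.k a ≤ 2) (hchar : ringChar F = 2) (c a b : Fin (d + 1))
    (h : max (S.k a) (S.k b) = 2) :
    qtG S F x a b * S.adj F c ∈ Submodule.span F (qtSet S F x) := by
  rw [qtG_mul_adj]
  apply Submodule.sum_mem
  intro e _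
  by_cases he : max (S.k a) (S.k e) = 2
  · exact Submodule.smul_mem _ _ (qtG_mem S F x he)
  · obtain ⟨hka, hke⟩ := max_two_cases S hqt he
    have hkb : S.k b = 2 := by rw [hka] at h; omega
    have hdc := S.double_count x b c e
    rw [hke, one_mul, hkb] at hdc
    have hz : (S.p b c e : F) = 0 :=
      even_cast_zero F hchar ⟨S.p c (S.inv e) (S.inv b), by omega⟩
    rw [hz, zero_smul]
    exact Submodule.zero_mem _

lemma terw_mul (hqt : ∀ a, S.k a ≤ 2) (hchar : ringChar F = 2) :
    ∀ L ∈ S.Terw F x, ∀ N ∈ Submodule.span F (qtSet S F x),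
      L * N ∈ Submodule.span F (qtSet S F x) ∧
      N * L ∈ Submodule.span F (qtSet S F x) := by
  intro L hL
  have hL' : L ∈ Algebra.adjoin F (Set.range (S.adj F) ∪ Set.range (S.dualIdem F x)) := hL
  clear hL
  induction hL' using Algebra.adjoin_induction with
  | mem y hy =>
    intro N hN
    induction hN using Submodule.span_induction with
    | mem M hM =>
      obtain ⟨a, b, hab, rfl⟩ := hM
      rw [qtG_eq S F x a b]
      rcases hy with hy | hy <;> obtain ⟨c, rfl⟩ := hy
      · exact ⟨adj_mul_mem S F x hqt hchar c a b hab,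
          mul_adj_mem S F x hqt hchar c a b hab⟩
      · constructor
        · rw [dualIdem_mul_qtG]
          split
          exacts [qtG_mem S F x hab, Submodule.zero_mem _]
        · rw [qtG_mul_dualIdem]
          split
          exacts [qtG_mem S F x hab, Submodule.zero_mem _]
    | zero =>
      exact ⟨by rw [mul_zero]; exact Submodule.zero_mem _,
        by rw [zero_mul]; exact Submodule.zero_mem _⟩
    | add u v hu hv ihu ihv =>
      exact ⟨by rw [mul_add]; exact Submodule.add_mem _ ihu.1 ihv.1,
        by rw [add_mul]; exact Submodule.add_mem _ ihu.2 ihv.2⟩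
    | smul r u hu ihu =>
      exact ⟨by rw [mul_smul_comm]; exact Submodule.smul_mem _ _ ihu.1,
        by rw [smul_mul_assoc]; exact Submodule.smul_mem _ _ ihu.2⟩
  | algebraMap r =>
    intro N hN
    have h1 : algebraMap F (Matrix X X F) r * N = r • N := by
      rw [Algebra.algebraMap_eq_smul_one, smul_mul_assoc, one_mul]
    have h2 : N * algebraMap F (Matrix X X F) r = r • N := by
      rw [Algebra.algebraMap_eq_smul_one, mul_smul_comm, mul_one]
    rw [h1, h2]
    exact ⟨Submodule.smul_mem _ _ hN, Submodule.smul_mem _ _ hN⟩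
  | add y z hy hz ihy ihz =>
    intro N hN
    exact ⟨by rw [add_mul]; exact Submodule.add_mem _ (ihy N hN).1 (ihz N hN).1,
      by rw [mul_add]; exact Submodule.add_mem _ (ihy N hN).2 (ihz N hN).2⟩
  | mul y z hy hz ihy ihz =>
    intro N hN
    exact ⟨by rw [mul_assoc]; exact (ihy _ ((ihz N hN).1)).1,
      by rw [← mul_assoc]; exact (ihz _ ((ihy N hN).2)).2⟩

lemma span_le_terw : ∀ N ∈ Submodule.span F (qtSet S F x), N ∈ S.Terw F x := by
  intro N hN
  have hE : ∀ c, S.dualIdem F x c ∈ S.Terw F x := fun c =>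
    Algebra.subset_adjoin (Or.inr ⟨c, rfl⟩)
  have hA : ∀ c, S.adj F c ∈ S.Terw F x := fun c =>
    Algebra.subset_adjoin (Or.inl ⟨c, rfl⟩)
  have hJ : allOnes X F ∈ S.Terw F x := by
    rw [allOnes_eq_sum S F]
    exact sum_mem fun c _ => hA c
  have hmem : ∀ M ∈ qtSet S F x, M ∈ S.Terw F x := by
    rintro M ⟨a, b, -, rfl⟩
    exact mul_mem (mul_mem (hE a) hJ) (hE b)
  have hsub : qtSet S F x ⊆ (Subalgebra.toSubmodule (S.Terw F x) : Set (Matrix X X F)) :=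
    fun M hM => hmem M hM
  exact Submodule.span_le.mpr hsub hN

lemma cube_zero (hchar : ringChar F = 2) (hqt : ∀ a, S.k a ≤ 2) :
    ∀ N₁ ∈ Submodule.span F (qtSet S F x), ∀ N₂ ∈ Submodule.span F (qtSet S F x),
      ∀ N₃ ∈ Submodule.span F (qtSet S F x), N₁ * N₂ * N₃ = 0 := by
  have base : ∀ M₁ ∈ qtSet S F x, ∀ M₂ ∈ qtSet S F x, ∀ M₃ ∈ qtSet S F x,
      M₁ * M₂ * M₃ = 0 := by
    rintro M₁ ⟨a, b, h1, rfl⟩ M₂ ⟨c, e, h2, rfl⟩ M₃ ⟨f, g, h3, rfl⟩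
    rw [qtG_eq S F x a b, qtG_eq S F x c e, qtG_eq S F x f g,
      qtG_mul_qtG, smul_mul_assoc, qtG_mul_qtG, smul_smul]
    by_cases hbc : b = c
    · by_cases hef : e = f
      · rw [if_pos hbc, if_pos hef]
        subst hbc; subst hef
        have h22 : S.k b = 2 ∨ S.k e = 2 := by omega
        rcases h22 with h22 | h22
        · rw [h22, two_cast_zero F hchar, zero_mul, zero_smul]
        · rw [h22, two_cast_zero F hchar, mul_zero, zero_smul]
      · rw [if_neg hef, mul_zero, zero_smul]
    · rw [if_neg hbc, zero_mul, zero_smul]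
  intro N₁ h1
  induction h1 using Submodule.span_induction with
  | mem M₁ hM₁ =>
    intro N₂ h2
    induction h2 using Submodule.span_induction with
    | mem M₂ hM₂ =>
      intro N₃ h3
      induction h3 using Submodule.span_induction with
      | mem M₃ hM₃ => exact base _ hM₁ _ hM₂ _ hM₃
      | zero => rw [mul_zero]
      | add u v hu hv ihu ihv => rw [mul_add, ihu, ihv, add_zero]
      | smul r u hu ihu => rw [mul_smul_comm, ihu, smul_zero]
    | zero => intro N₃ _; rw [mul_zero, zero_mul]
    | add u v hu hv ihu ihv =>
      intro N₃ h3
      rw [mul_add, add_mul, ihu N₃ h3, ihv N₃ h3, add_zero]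
    | smul r u hu ihu =>
      intro N₃ h3
      rw [mul_smul_comm, smul_mul_assoc, ihu N₃ h3, smul_zero]
  | zero => intro N₂ _ N₃ _; rw [zero_mul, zero_mul]
  | add u v hu hv ihu ihv =>
    intro N₂ h2 N₃ h3
    rw [add_mul, add_mul, ihu N₂ h2 N₃ h3, ihv N₂ h2 N₃ h3, add_zero]
  | smul r u hu ihu =>
    intro N₂ h2 N₃ h3
    rw [smul_mul_assoc, smul_mul_assoc, ihu N₂ h2 N₃ h3, smul_zero]

lemma qtG_ne_zero {a : Fin (d + 1)} (ha : 0 < S.k a) : qtG S F x a a ≠ 0 := by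
  intro h0
  have hcard : 0 < (Finset.univ.filter fun u => S.R a x u).card := by
    rw [S.card_X x a]; exact ha
  obtain ⟨u, hu⟩ := Finset.card_pos.mp hcard
  have hu' : S.R a x u := (Finset.mem_filter.mp hu).2
  have : qtG S F x a a u u = 0 := by rw [h0]; rfl
  rw [qtG] at this
  simp [qtChi, hu'] at this

end MainLemmas


set_option synthInstance.maxHeartbeats 1000000
set_option maxHeartbeats 1000000

/-- in characteristic `2`, the Terwilliger algebra of a non-thin quasi-thin
scheme is not semisimple; the span of `{E_a^* J E_b^* : max(k_a,k_b) = 2}` is a nonzero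
two-sided ideal of `T` whose cube is zero. -/
theorem stmt_15 {X : Type} [Fintype X] [DecidableEq X] {d : ℕ} (S : AssocScheme X d)
    (F : Type) [Field F] (x : X) (hqt : ∀ a, S.k a ≤ 2) (hchar : ringChar F = 2)
    (hnotthin : ∃ a, S.k a = 2) :
    ¬ IsSemisimpleRing (S.Terw F x) ∧
    Submodule.span F {M : Matrix X X F | ∃ a b, max (S.k a) (S.k b) = 2 ∧
        M = S.dualIdem F x a * allOnes X F * S.dualIdem F x b} ≠ ⊥ ∧
    (∀ N ∈ Submodule.span F {M : Matrix X X F | ∃ a b, max (S.k a) (S.k b) = 2 ∧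
        M = S.dualIdem F x a * allOnes X F * S.dualIdem F x b}, N ∈ S.Terw F x) ∧
    (∀ L ∈ S.Terw F x,
      ∀ N ∈ Submodule.span F {M : Matrix X X F | ∃ a b, max (S.k a) (S.k b) = 2 ∧
          M = S.dualIdem F x a * allOnes X F * S.dualIdem F x b},
        L * N ∈ Submodule.span F {M : Matrix X X F | ∃ a b, max (S.k a) (S.k b) = 2 ∧
          M = S.dualIdem F x a * allOnes X F * S.dualIdem F x b} ∧
        N * L ∈ Submodule.span F {M : Matrix X X F | ∃ a b, max (S.k a) (S.k b) = 2 ∧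
          M = S.dualIdem F x a * allOnes X F * S.dualIdem F x b}) ∧
    (∀ N₁ ∈ Submodule.span F {M : Matrix X X F | ∃ a b, max (S.k a) (S.k b) = 2 ∧
        M = S.dualIdem F x a * allOnes X F * S.dualIdem F x b},
      ∀ N₂ ∈ Submodule.span F {M : Matrix X X F | ∃ a b, max (S.k a) (S.k b) = 2 ∧
        M = S.dualIdem F x a * allOnes X F * S.dualIdem F x b},
      ∀ N₃ ∈ Submodule.span F {M : Matrix X X F | ∃ a b, max (S.k a) (S.k b) = 2 ∧
        M = S.dualIdem F x a * allOnes X F * S.dualIdem F x b},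
        N₁ * N₂ * N₃ = 0) := by
  
  have sp_eq : Submodule.span F {M : Matrix X X F | ∃ a b, max (S.k a) (S.k b) = 2 ∧
      M = S.dualIdem F x a * allOnes X F * S.dualIdem F x b}
      = Submodule.span F (qtSet S F x) := rfl
  obtain ⟨a0, ha0⟩ := hnotthin
  have hG0 : qtG S F x a0 a0 ∈ Submodule.span F (qtSet S F x) :=
    qtG_mem S F x (by rw [ha0]; exact max_self 2)
  have hGT : qtG S F x a0 a0 ∈ S.Terw F x := span_le_terw S F x _ hG0
  have hGne : qtG S F x a0 a0 ≠ 0 := qtG_ne_zero S F x (S.k_pos_s15 a0)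
  refine ⟨?_, ?_, ?_, ?_, ?_⟩
  · -- not semisimple
    set I : Submodule (S.Terw F x) (S.Terw F x) :=
      { carrier := {y | (y : Matrix X X F) ∈ Submodule.span F (qtSet S F x)}
        add_mem' := fun {y z} hy hz => by
          simp only [Set.mem_setOf_eq]
          rw [show ((y + z : S.Terw F x) : Matrix X X F)
            = (y : Matrix X X F) + (z : Matrix X X F) from rfl]
          exact Submodule.add_mem _ hy hz
        zero_mem' := by
          simp only [Set.mem_setOf_eq]
          rw [show ((0 : S.Terw F x) : Matrix X X F) = 0 from rfl]
          exact Submodule.zero_mem _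
        smul_mem' := fun c y hy => by
          simp only [Set.mem_setOf_eq]
          rw [show ((c • y : S.Terw F x) : Matrix X X F)
            = (c : Matrix X X F) * (y : Matrix X X F) from rfl]
          exact (terw_mul S F x hqt hchar (c : Matrix X X F) c.2 (y : Matrix X X F) hy).1 }
      with hI
    apply not_semisimple_of_nilpotent_ideal I
    · intro a ha r
      exact (terw_mul S F x hqt hchar (r : Matrix X X F) r.2 (a : Matrix X X F) ha).2
    · intro a ha b hb c hc
      exact Subtype.ext (cube_zero S F x hchar hqt _ ha _ hb _ hc)
    · intro hbot
      have hmem : (⟨qtG S F x a0 a0, hGT⟩ : S.Terw F x) ∈ I := hG0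
      rw [hbot, Submodule.mem_bot] at hmem
      exact hGne (congrArg Subtype.val hmem)
  · -- nonzero
    rw [sp_eq]
    intro hbot
    rw [hbot, Submodule.mem_bot] at hG0
    exact hGne hG0
  · -- contained in T
    rw [sp_eq]
    exact span_le_terw S F x
  · -- two-sided ideal
    rw [sp_eq]
    exact fun L hL N hN => terw_mul S F x hqt hchar L hL N hN
  · -- cube zero
    rw [sp_eq]
    exact cube_zero S F x hchar hqt
end

section
/- Let S be a quasi-thin association scheme and let A_2 = {a : k_a = 2} be nonempty. Define b ∼ c for b, c ∈ A_2 iff (b,c) ∈ U, where U consists of pairs (g,h) with k_g = k_h = |R_{g'}R_h| = 2 together with all bad pairs of S. Then ∼ is an equivalence relation on A_2. -/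
open scoped Classical

open AssocScheme

/-- `(u, v)` is a bad pair of `S`. -/
def AssocScheme.IsBadPair {X : Type} [Fintype X] {d : ℕ} (S : AssocScheme X d)
    (u v : Fin (d + 1)) : Prop :=
  ∃ a : ℕ, 1 ≤ a ∧ ∃ i j l : ℕ → Fin (d + 1),
    i 0 = u ∧ l a = v ∧
    (∀ b ≤ a, S.k (i b) = 2 ∧ S.k (l b) = 2 ∧ S.p (i b) (j b) (l b) = 1) ∧
    S.nProd (S.inv (i 0)) (l a) = 1 ∧
    ∀ c < a, l c = i (c + 1)

/-- the relation `U`: either `k_g = k_h = |R_{g'} R_h| = 2`, or `(g,h)` is a bad pair -/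
def AssocScheme.URel {X : Type} [Fintype X] {d : ℕ} (S : AssocScheme X d)
    (g h : Fin (d + 1)) : Prop :=
  (S.k g = 2 ∧ S.k h = 2 ∧ S.nProd (S.inv g) h = 2) ∨ S.IsBadPair g h

namespace AssocScheme

open Finset

variable {X : Type} [Fintype X] {d : ℕ} (S : AssocScheme X d)

lemma rel_eq_of {i j : Fin (d + 1)} {x y : X} (hi : S.R i x y) (hj : S.R j x y) : i = j := by
  obtain ⟨c, _, hu⟩ := S.partition x y
  rw [hu i hi, hu j hj]

lemma nonempty_X (S : AssocScheme X d) : Nonempty X := by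
  obtain ⟨x, -, -⟩ := S.rel_nonempty 0
  exact ⟨x⟩

lemma inv_invol (i : Fin (d + 1)) : S.inv (S.inv i) = i := by
  obtain ⟨x, y, hxy⟩ := S.rel_nonempty i
  exact S.rel_eq_of (x := x) (y := y) (by rw [S.inv_spec, S.inv_spec]; exact hxy) hxy

lemma p_card (i j c : Fin (d + 1)) {x y : X} (h : S.R c x y) :
    (Finset.univ.filter fun z => S.R i x z ∧ S.R j z y).card = S.p i j c := by
  have := S.p_spec i j c x y h
  rwa [Set.ncard_eq_toFinset_card', Set.toFinset_setOf] at this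

lemma k_card (i : Fin (d + 1)) (x : X) :
    (Finset.univ.filter fun z => S.R i x z).card = S.k i := by
  have h0 : S.R 0 x x := (S.diag x x).2 rfl
  have hk : S.k i = S.p i (S.inv i) 0 := rfl
  rw [hk, ← S.p_card i (S.inv i) 0 h0]
  congr 1
  apply Finset.filter_congr
  intro z _
  constructor
  · intro hz; exact ⟨hz, (S.inv_spec i z x).2 hz⟩
  · intro hz; exact hz.1

lemma k_pos_s17 (i : Fin (d + 1)) : 0 < S.k i := by
  obtain ⟨x, y, h⟩ := S.rel_nonempty i
  rw [← S.k_card i x]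
  exact Finset.card_pos.2 ⟨y, by simp [h]⟩

lemma sum_ite_card (P : X → Prop) (c : ℕ) :
    (∑ y : X, if P y then c else 0) = (Finset.univ.filter P).card * c := by
  rw [Finset.card_filter, Finset.sum_mul]
  exact Finset.sum_congr rfl fun y _ => by split <;> simp

lemma k_inv (i : Fin (d + 1)) : S.k (S.inv i) = S.k i := by
  have hX : 0 < Fintype.card X := Fintype.card_pos_iff.2 S.nonempty_X
  have h1 : (∑ x : X, ∑ z : X, if S.R i x z then 1 else 0) = Fintype.card X * S.k i := by
    rw [Finset.sum_congr rfl fun x _ => ?_, Finset.sum_const, smul_eq_mul, Finset.card_univ]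
    rw [← Finset.card_filter]
    exact S.k_card i x
  have h2 : (∑ z : X, ∑ x : X, if S.R i x z then 1 else 0)
      = Fintype.card X * S.k (S.inv i) := by
    rw [Finset.sum_congr rfl fun z _ => ?_, Finset.sum_const, smul_eq_mul, Finset.card_univ]
    rw [← Finset.card_filter, ← S.k_card (S.inv i) z]
    congr 1
    apply Finset.filter_congr
    intro w _
    exact ⟨fun hw => (S.inv_spec i z w).2 hw, fun hw => (S.inv_spec i z w).1 hw⟩
  rw [Finset.sum_comm] at h1
  exact Nat.eq_of_mul_eq_mul_left hX (by rw [← h2, h1])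

lemma I1 (i j l : Fin (d + 1)) :
    S.k l * S.p i j l = S.k i * S.p l (S.inv j) i := by
  obtain ⟨x⟩ := S.nonempty_X
  have side1 : (∑ y : X, ∑ z : X, if S.R i x z ∧ S.R j z y ∧ S.R l x y then 1 else 0)
      = S.k l * S.p i j l := by
    rw [Finset.sum_congr rfl fun y _ =>
      show (∑ z : X, if S.R i x z ∧ S.R j z y ∧ S.R l x y then 1 else 0)
        = if S.R l x y then S.p i j l else 0 from ?_]
    · rw [sum_ite_card, S.k_card]
    · by_cases hy : S.R l x y
      · rw [if_pos hy, ← S.p_card i j l hy, Finset.card_filter]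
        exact Finset.sum_congr rfl fun z _ => by
          by_cases hz : S.R i x z ∧ S.R j z y
          · rw [if_pos ⟨hz.1, hz.2, hy⟩, if_pos hz]
          · rw [if_neg (fun hc => hz ⟨hc.1, hc.2.1⟩), if_neg hz]
      · rw [if_neg hy]
        exact Finset.sum_eq_zero fun z _ => if_neg (fun hc => hy hc.2.2)
  have side2 : (∑ z : X, ∑ y : X, if S.R i x z ∧ S.R j z y ∧ S.R l x y then 1 else 0)
      = S.k i * S.p l (S.inv j) i := by
    rw [Finset.sum_congr rfl fun z _ =>
      show (∑ y : X, if S.R i x z ∧ S.R j z y ∧ S.R l x y then 1 else 0)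
        = if S.R i x z then S.p l (S.inv j) i else 0 from ?_]
    · rw [sum_ite_card, S.k_card]
    · by_cases hz : S.R i x z
      · rw [if_pos hz, ← S.p_card l (S.inv j) i hz, Finset.card_filter]
        exact Finset.sum_congr rfl fun y _ => by
          by_cases hy : S.R l x y ∧ S.R (S.inv j) y z
          · rw [if_pos ⟨hz, (S.inv_spec j y z).1 hy.2, hy.1⟩, if_pos hy]
          · rw [if_neg, if_neg hy]
            intro hc
            exact hy ⟨hc.2.2, (S.inv_spec j y z).2 hc.2.1⟩
      · rw [if_neg hz]
        exact Finset.sum_eq_zero fun y _ => if_neg (fun hc => hz hc.1)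
  rw [← side1, Finset.sum_comm, side2]

lemma I2 (i j c : Fin (d + 1)) : S.p i j c = S.p (S.inv j) (S.inv i) (S.inv c) := by
  obtain ⟨x, y, hc⟩ := S.rel_nonempty c
  have hc' : S.R (S.inv c) y x := (S.inv_spec c y x).2 hc
  rw [← S.p_card i j c hc, ← S.p_card (S.inv j) (S.inv i) (S.inv c) hc']
  congr 1
  apply Finset.filter_congr
  intro z _
  constructor
  · intro hz; exact ⟨(S.inv_spec j y z).2 hz.2, (S.inv_spec i z x).2 hz.1⟩
  · intro hz; exact ⟨(S.inv_spec i z x).1 hz.2, (S.inv_spec j y z).1 hz.1⟩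

/-- the class of a pair -/
noncomputable def cl (x y : X) : Fin (d + 1) := (S.partition x y).choose

lemma cl_spec (x y : X) : S.R (S.cl x y) x y := (S.partition x y).choose_spec.1

lemma cl_eq {c : Fin (d + 1)} {x y : X} (h : S.R c x y) : S.cl x y = c :=
  ((S.partition x y).choose_spec.2 c h).symm

lemma sum_formula (i j : Fin (d + 1)) :
    (∑ c : Fin (d + 1), S.k c * S.p i j c) = S.k i * S.k j := by
  obtain ⟨x⟩ := S.nonempty_X
  have side1 : (∑ z : X, ∑ y : X, if S.R i x z ∧ S.R j z y then 1 else 0)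
      = S.k i * S.k j := by
    rw [Finset.sum_congr rfl fun z _ =>
      show (∑ y : X, if S.R i x z ∧ S.R j z y then 1 else 0)
        = if S.R i x z then S.k j else 0 from ?_]
    · rw [sum_ite_card, S.k_card]
    · by_cases hz : S.R i x z
      · rw [if_pos hz, ← S.k_card j z, Finset.card_filter]
        exact Finset.sum_congr rfl fun y _ => by
          by_cases hy : S.R j z y
          · rw [if_pos ⟨hz, hy⟩, if_pos hy]
          · rw [if_neg (fun hc => hy hc.2), if_neg hy]
      · rw [if_neg hz]
        exact Finset.sum_eq_zero fun y _ => if_neg (fun hc => hz hc.1)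
  have side2 : (∑ y : X, ∑ z : X, if S.R i x z ∧ S.R j z y then 1 else 0)
      = ∑ c : Fin (d + 1), S.k c * S.p i j c := by
    have inner : ∀ y : X, (∑ z : X, if S.R i x z ∧ S.R j z y then 1 else 0)
        = S.p i j (S.cl x y) := by
      intro y
      rw [← S.p_card i j (S.cl x y) (S.cl_spec x y), Finset.card_filter]
    rw [Finset.sum_congr rfl fun y _ => inner y]
    rw [← Finset.sum_fiberwise Finset.univ (fun y => S.cl x y) (fun y => S.p i j (S.cl x y))]
    refine Finset.sum_congr rfl fun c _ => ?_
    have hfib : (Finset.univ.filter fun y => S.cl x y = c)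
        = Finset.univ.filter fun y => S.R c x y := by
      apply Finset.filter_congr
      intro y _
      constructor
      · rintro rfl; exact S.cl_spec x y
      · intro hy; exact S.cl_eq hy
    rw [Finset.sum_congr rfl (fun y hy => ?_), Finset.sum_const, smul_eq_mul, hfib, S.k_card]
    have := (Finset.mem_filter.1 hy).2
    rw [this]
  rw [← side2, Finset.sum_comm, side1]

lemma p_flip {g h : Fin (d + 1)} (hg : S.k g = 2) (hh : S.k h = 2) (c : Fin (d + 1)) :
    S.p g c h = S.p c (S.inv h) (S.inv g) := by
  have h1 := S.I1 g c h
  rw [hh, hg] at h1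
  have h2 := S.I2 h (S.inv c) g
  rw [S.inv_invol] at h2
  omega

lemma term_eq {g h : Fin (d + 1)} (hg : S.k g = 2) (hh : S.k h = 2) (c : Fin (d + 1)) :
    S.k c * S.p (S.inv g) h c = 2 * S.p g c h := by
  have h1 := S.I1 (S.inv g) h c
  rw [S.k_inv, hg] at h1
  rw [h1, S.p_flip hg hh c]

lemma nprod_pos (i j : Fin (d + 1)) : 0 < S.nProd i j := by
  obtain ⟨x⟩ := S.nonempty_X
  obtain ⟨z, hz⟩ : ∃ z, S.R i x z := by
    have := S.k_pos_s17 i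
    rw [← S.k_card i x] at this
    obtain ⟨z, hz⟩ := Finset.card_pos.1 this
    exact ⟨z, (Finset.mem_filter.1 hz).2⟩
  obtain ⟨y, hy⟩ : ∃ y, S.R j z y := by
    have := S.k_pos_s17 j
    rw [← S.k_card j z] at this
    obtain ⟨y, hy⟩ := Finset.card_pos.1 this
    exact ⟨y, (Finset.mem_filter.1 hy).2⟩
  have hp : 0 < S.p i j (S.cl x y) := by
    rw [← S.p_card i j _ (S.cl_spec x y)]
    exact Finset.card_pos.2 ⟨z, by simp [hz, hy]⟩
  exact Finset.card_pos.2 ⟨S.cl x y, by simp [hp]⟩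

lemma nprod_le2 {g h : Fin (d + 1)} (hg : S.k g = 2) (hh : S.k h = 2) :
    S.nProd (S.inv g) h ≤ 2 := by
  classical
  set T := Finset.univ.filter fun c => 0 < S.p (S.inv g) h c with hT
  have hsum : (∑ c ∈ T, S.k c * S.p (S.inv g) h c) ≤ 4 := by
    calc (∑ c ∈ T, S.k c * S.p (S.inv g) h c)
        ≤ ∑ c : Fin (d + 1), S.k c * S.p (S.inv g) h c :=
          Finset.sum_le_sum_of_subset (Finset.subset_univ T)
      _ = S.k (S.inv g) * S.k h := S.sum_formula _ _
      _ = 4 := by rw [S.k_inv, hg, hh]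
  have hlow : ∀ c ∈ T, 2 ≤ S.k c * S.p (S.inv g) h c := by
    intro c hc
    have hc' : 0 < S.p (S.inv g) h c := (Finset.mem_filter.1 hc).2
    have h1 : 0 < S.k c * S.p (S.inv g) h c := Nat.mul_pos (S.k_pos_s17 c) hc'
    rw [S.term_eq hg hh] at h1 ⊢
    omega
  have := Finset.card_nsmul_le_sum T _ 2 hlow
  rw [smul_eq_mul] at this
  have hcard : S.nProd (S.inv g) h = T.card := rfl
  omega

lemma exists_step {g h : Fin (d + 1)} (hg : S.k g = 2) (hh : S.k h = 2)
    (h2 : S.nProd (S.inv g) h = 2) : ∃ c, S.p g c h = 1 := by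
  classical
  by_contra hno
  push_neg at hno
  set T := Finset.univ.filter fun c => 0 < S.p (S.inv g) h c with hT
  have hsum : (∑ c ∈ T, S.k c * S.p (S.inv g) h c) = 4 := by
    rw [Finset.sum_filter_of_ne (fun c _ hc => by
      by_contra h0
      simp only [not_lt, Nat.le_zero] at h0
      exact hc (by rw [h0, mul_zero]))]
    rw [S.sum_formula, S.k_inv, hg, hh]
  have hlow : ∀ c ∈ T, 4 ≤ S.k c * S.p (S.inv g) h c := by
    intro c hc
    have hc' : 0 < S.p (S.inv g) h c := (Finset.mem_filter.1 hc).2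
    have h1 : 0 < S.k c * S.p (S.inv g) h c := Nat.mul_pos (S.k_pos_s17 c) hc'
    rw [S.term_eq hg hh] at h1 ⊢
    have := hno c
    omega
  have hcard : T.card = 2 := h2
  have := Finset.card_nsmul_le_sum T _ 4 hlow
  rw [smul_eq_mul, hcard, hsum] at this
  omega

lemma nprod_symm (g h : Fin (d + 1)) : S.nProd (S.inv g) h = S.nProd (S.inv h) g := by
  classical
  have key : ∀ c, S.p (S.inv g) h c = S.p (S.inv h) g (S.inv c) := by
    intro c
    have := S.I2 (S.inv g) h c
    rwa [S.inv_invol] at this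
  unfold nProd
  apply Finset.card_bij' (fun c _ => S.inv c) (fun c _ => S.inv c)
  · intro c hc
    simp only [Finset.mem_filter, Finset.mem_univ, true_and] at hc ⊢
    rw [← key]; exact hc
  · intro c hc
    simp only [Finset.mem_filter, Finset.mem_univ, true_and] at hc ⊢
    rw [key, S.inv_invol]; exact hc
  · intro c _; exact S.inv_invol c
  · intro c _; exact S.inv_invol c

/-- a chain from `g` to `h` (a bad pair minus the `nProd` condition) -/
def Chain (g h : Fin (d + 1)) : Prop :=
  ∃ a : ℕ, 1 ≤ a ∧ ∃ i j l : ℕ → Fin (d + 1),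
    i 0 = g ∧ l a = h ∧
    (∀ b ≤ a, S.k (i b) = 2 ∧ S.k (l b) = 2 ∧ S.p (i b) (j b) (l b) = 1) ∧
    ∀ c < a, l c = i (c + 1)

lemma p_id_one (g : Fin (d + 1)) : S.p g 0 g = 1 := by
  obtain ⟨x, y, hg⟩ := S.rel_nonempty g
  rw [← S.p_card g 0 g hg]
  rw [show (Finset.univ.filter fun z => S.R g x z ∧ S.R 0 z y) = {y} from ?_]
  · exact Finset.card_singleton y
  · ext z
    simp only [Finset.mem_filter, Finset.mem_univ, true_and, Finset.mem_singleton, S.diag]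
    constructor
    · rintro ⟨-, rfl⟩; rfl
    · rintro rfl; exact ⟨hg, rfl⟩

lemma p_rev {i j l : Fin (d + 1)} (hk : S.k i = 2) (hl : S.k l = 2) (hp : S.p i j l = 1) :
    S.p l (S.inv j) i = 1 := by
  have := S.I1 i j l
  rw [hk, hl, hp] at this
  omega

lemma chain_refl {g : Fin (d + 1)} (hg : S.k g = 2) : S.Chain g g :=
  ⟨1, le_refl 1, fun _ => g, fun _ => 0, fun _ => g, rfl, rfl,
    fun _ _ => ⟨hg, hg, S.p_id_one g⟩, fun _ _ => rfl⟩

lemma chain_symm {g h : Fin (d + 1)} (hc : S.Chain g h) : S.Chain h g := by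
  obtain ⟨a, ha, i, j, l, h0, hA, hst, hlink⟩ := hc
  refine ⟨a, ha, fun b => l (a - b), fun b => S.inv (j (a - b)), fun b => i (a - b),
    by simpa using hA, by simpa using h0, ?_, ?_⟩
  · intro b hb
    obtain ⟨k1, k2, hp⟩ := hst (a - b) (Nat.sub_le a b)
    exact ⟨k2, k1, S.p_rev k1 k2 hp⟩
  · intro c hcl
    have h1 : a - c - 1 < a := by omega
    have hlk := hlink (a - c - 1) h1
    have e : a - c - 1 + 1 = a - c := by omega
    rw [e] at hlk
    show i (a - c) = l (a - (c + 1))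
    rw [show a - (c + 1) = a - c - 1 from by omega, ← hlk]

lemma chain_trans {g h f : Fin (d + 1)} (c1 : S.Chain g h) (c2 : S.Chain h f) :
    S.Chain g f := by
  obtain ⟨a1, ha1, i1, j1, l1, h10, h1A, st1, lk1⟩ := c1
  obtain ⟨a2, ha2, i2, j2, l2, h20, h2A, st2, lk2⟩ := c2
  refine ⟨a1 + 1 + a2, by omega,
    (fun b => if b ≤ a1 then i1 b else i2 (b - (a1 + 1))),
    (fun b => if b ≤ a1 then j1 b else j2 (b - (a1 + 1))),
    (fun b => if b ≤ a1 then l1 b else l2 (b - (a1 + 1))), ?_, ?_, ?_, ?_⟩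
  · simpa using h10
  · have hn : ¬ (a1 + 1 + a2 ≤ a1) := by omega
    simp only [if_neg hn]
    rw [show a1 + 1 + a2 - (a1 + 1) = a2 from by omega]
    exact h2A
  · intro b hb
    by_cases hba : b ≤ a1
    · simp only [if_pos hba]; exact st1 b hba
    · simp only [if_neg hba]; exact st2 (b - (a1 + 1)) (by omega)
  · intro c hc
    by_cases hca : c < a1
    · have e1 : c ≤ a1 := by omega
      have e2 : c + 1 ≤ a1 := by omega
      simp only [if_pos e1, if_pos e2]
      exact lk1 c hca
    · by_cases hceq : c = a1
      · subst hceq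
        have hn : ¬ (c + 1 ≤ c) := by omega
        simp only [if_pos (le_refl c), if_neg hn]
        rw [show c + 1 - (c + 1) = 0 from by omega, h20, h1A]
      · have e1 : ¬ c ≤ a1 := by omega
        have e2 : ¬ c + 1 ≤ a1 := by omega
        simp only [if_neg e1, if_neg e2]
        rw [show c + 1 - (a1 + 1) = (c - (a1 + 1)) + 1 from by omega]
        exact lk2 (c - (a1 + 1)) (by omega)

lemma chain_of_urel {g h : Fin (d + 1)} (hu : S.URel g h) : S.Chain g h := by
  rcases hu with ⟨hg, hh, h2⟩ | ⟨a, ha, i, j, l, h0, hA, hst, hnp, hlink⟩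
  · obtain ⟨c, hc⟩ := S.exists_step hg hh h2
    refine ⟨1, le_refl 1, fun _ => g, (fun b => if b = 0 then 0 else c),
      (fun b => if b = 0 then g else h), rfl, by simp, ?_, ?_⟩
    · intro b hb
      interval_cases b
      · simp only [if_pos rfl]
        exact ⟨hg, hg, S.p_id_one g⟩
      · simp only [if_neg one_ne_zero]
        exact ⟨hg, hh, hc⟩
    · intro b hb
      interval_cases b
      simp
  · exact ⟨a, ha, i, j, l, h0, hA, hst, hlink⟩

lemma urel_of_chain {g h : Fin (d + 1)} (hc : S.Chain g h) : S.URel g h := by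
  obtain ⟨a, ha, i, j, l, h0, hA, hst, hlink⟩ := hc
  have hg : S.k g = 2 := by rw [← h0]; exact (hst 0 (Nat.zero_le a)).1
  have hh : S.k h = 2 := by rw [← hA]; exact (hst a (le_refl a)).2.1
  have hp1 : 0 < S.nProd (S.inv g) h := S.nprod_pos _ _
  have hp2 : S.nProd (S.inv g) h ≤ 2 := S.nprod_le2 hg hh
  rcases Nat.lt_or_ge (S.nProd (S.inv g) h) 2 with hlt | hge
  · right
    exact ⟨a, ha, i, j, l, h0, hA, hst, by rw [h0, hA]; omega, hlink⟩
  · left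
    exact ⟨hg, hh, le_antisymm hp2 hge⟩

end AssocScheme

/-- for a quasi-thin scheme with `A_2 ≠ ∅`, the relation `∼` induced by `U`
is an equivalence relation on `A_2 = {a : k_a = 2}`. -/
theorem stmt_17 {X : Type} [Fintype X] {d : ℕ} (S : AssocScheme X d)
    (hqt : ∀ a, S.k a ≤ 2) (hne : ∃ a, S.k a = 2) :
    Equivalence (fun b c : {a : Fin (d + 1) // S.k a = 2} => S.URel b.1 c.1) := by
  constructor
  · intro b
    exact S.urel_of_chain (S.chain_refl b.2)
  · intro b c h
    exact S.urel_of_chain (S.chain_symm (S.chain_of_urel h))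
  · intro b c e h1 h2
    exact S.urel_of_chain (S.chain_trans (S.chain_of_urel h1) (S.chain_of_urel h2))
end
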